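/- Let q > 1 and λ > 0 be real numbers and set X = { q^{n²} : n ∈ ℕ, n ≥ 1 } ⊆ ℝ with the metric induced from the real line. Then there exists a correspondence R between X and X with sup { |d(x,x') − λ·d(y,y')| : (x,y), (x',y') ∈ R } < ∞ (i.e., λ·X lies at finite Gromov–Hausdorff distance from X) if and only if λ = 1. -/

import Mathlib

open ENNReal

/-- A correspondence between `X` and `Y`: a relation whose projections to both
factors are surjective. -/
def IsCorrespondence {X Y : Type*} (R : Set (X × Y)) : Prop :=
  (∀ x : X, ∃ y : Y, (x, y) ∈ R) ∧ (∀ y : Y, ∃ x : X, (x, y) ∈ R)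

/-- The distortion of a relation `R ⊆ X × Y`:
`sup { |d_X(x,x') − d_Y(y,y')| : (x,y) ∈ R, (x',y') ∈ R }`, valued in `[0,∞]`. -/
noncomputable def dis {X Y : Type*} [MetricSpace X] [MetricSpace Y]
    (R : Set (X × Y)) : ℝ≥0∞ :=
  ⨆ p ∈ R, ⨆ q ∈ R, ENNReal.ofReal |dist p.1 q.1 - dist p.2 q.2|

/-- The `l`-scaled distortion of a relation `R ⊆ X × Y`:
`sup { |d_X(x,x') − l·d_Y(y,y')| : (x,y) ∈ R, (x',y') ∈ R }`, valued in `[0,∞]`.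
Its finiteness is equivalent to finiteness of the Gromov–Hausdorff distance
between `X` and the rescaled space `l·Y`. -/
noncomputable def disScaled {X Y : Type*} [MetricSpace X] [MetricSpace Y]
    (l : ℝ) (R : Set (X × Y)) : ℝ≥0∞ :=
  ⨆ p ∈ R, ⨆ q ∈ R, ENNReal.ofReal |dist p.1 q.1 - l * dist p.2 q.2|

/-! Write `a n = q ^ (n ^ 2)`. Since `a (n + 1) / a n → ∞`, a positive difference `a i - a j`
is `a i * (1 + o(1))` as `i → ∞`. Bounded `λ`-distortion of a correspondence, applied to points
related to `a n` and `a 1`, gives such differences within `O(1)` of `λ * a n`, so `a i / a n → λ`.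
Because consecutive ratios blow up, this forces `i = n` for large `n`, and then `λ = 1`. -/

open Filter Topology

section SuperLacunary

variable {a : ℕ → ℝ}

theorem tendsto_atTop_of_tendsto_succ_div_atTop (ha_pos : ∀ n, 0 < a n)
    (ha_ratio : Tendsto (fun n => a (n + 1) / a n) atTop atTop) : Tendsto a atTop atTop := by
  obtain ⟨N, hN⟩ := eventually_atTop.1 (ha_ratio.eventually_ge_atTop 2)
  refine (tendsto_add_atTop_iff_nat N).1 <|
    tendsto_atTop_of_geom_le (ha_pos _) one_lt_two fun n => ?_
  have h := hN (n + N) (by omega)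
  rw [le_div_iff₀ (ha_pos _)] at h
  simpa [Nat.add_right_comm] using h

theorem tendsto_pred_div_nhds_zero (ha_ratio : Tendsto (fun n => a (n + 1) / a n) atTop atTop) :
    Tendsto (fun n => a (n - 1) / a n) atTop (𝓝 0) := by
  refine (ha_ratio.inv_tendsto_atTop.comp (tendsto_sub_atTop_nat 1)).congr' ?_
  filter_upwards [eventually_ge_atTop 1] with n hn
  simp [Nat.sub_add_cancel hn]

theorem tendsto_div_of_abs_sub_mul_le {α : Type*} {l : Filter α} {u v : α → ℝ} {lam C : ℝ}
    (hv : Tendsto v l atTop) (h : ∀ᶠ x in l, |u x - lam * v x| ≤ C) :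
    Tendsto (fun x => u x / v x) l (𝓝 lam) := by
  have hpos := hv.eventually_gt_atTop 0
  have h0 : Tendsto (fun x => (u x - lam * v x) / v x) l (𝓝 0) := by
    refine squeeze_zero_norm' ?_ ((tendsto_const_nhds (x := C)).div_atTop hv)
    filter_upwards [h, hpos] with x hx hvx
    rw [Real.norm_eq_abs, abs_div, abs_of_pos hvx]
    exact div_le_div_of_nonneg_right hx hvx.le
  refine (add_zero lam ▸ h0.const_add lam).congr' ?_
  filter_upwards [hpos] with x hvx
  field_simp
  ring

theorem tendsto_apply_div_of_abs_sub_sub_le (ha_pos : ∀ n, 0 < a n) (ha_mono : Monotone a)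
    (ha_ratio : Tendsto (fun n => a (n + 1) / a n) atTop atTop) {lam C : ℝ} (hlam : 0 < lam)
    {M J : ℕ → ℕ} (h : ∀ᶠ n in atTop, |a (M n) - a (J n) - lam * a n| ≤ C) :
    Tendsto (fun n => a (M n) / a n) atTop (𝓝 lam) := by
  have ha_top := tendsto_atTop_of_tendsto_succ_div_atTop ha_pos ha_ratio
  have hdiff : Tendsto (fun n => (a (M n) - a (J n)) / a n) atTop (𝓝 lam) :=
    tendsto_div_of_abs_sub_mul_le ha_top h
  have hbig := hdiff.eventually (eventually_gt_nhds (half_lt_self hlam))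
  have hgap : ∀ᶠ n in atTop, a (J n) < a (M n) := by
    filter_upwards [hbig] with n hn
    have := (half_pos hlam).trans hn
    rw [div_pos_iff_of_pos_right (ha_pos n)] at this
    linarith
  have hJM : ∀ᶠ n in atTop, J n < M n := hgap.mono fun n => ha_mono.reflect_lt
  have hM : Tendsto M atTop atTop := by
    have hMa : Tendsto (fun n => a (M n)) atTop atTop := by
      refine tendsto_atTop_mono' _ ?_ (ha_top.const_mul_atTop (half_pos hlam))
      filter_upwards [hbig] with n hn
      rw [lt_div_iff₀ (ha_pos n)] at hn
      linarith [ha_pos (J n)]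
    refine tendsto_atTop.2 fun K => ?_
    filter_upwards [hMa.eventually_gt_atTop (a K)] with n hn
    exact (ha_mono.reflect_lt hn).le
  have hsmall : Tendsto (fun n => a (J n) / a (M n)) atTop (𝓝 0) := by
    refine tendsto_of_tendsto_of_tendsto_of_le_of_le' tendsto_const_nhds
      ((tendsto_pred_div_nhds_zero ha_ratio).comp hM) ?_ ?_
    · exact Eventually.of_forall fun n => (div_pos (ha_pos _) (ha_pos _)).le
    · filter_upwards [hJM] with n hn
      exact div_le_div_of_nonneg_right (ha_mono (by omega)) (ha_pos _).le
  have hquot := hdiff.div ((tendsto_const_nhds (x := (1 : ℝ))).sub hsmall) (by norm_num)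
  rw [sub_zero, div_one] at hquot
  refine hquot.congr' ?_
  filter_upwards [hgap] with n hn
  have := (ha_pos (M n)).ne'
  have := (ha_pos n).ne'
  have := (sub_pos.2 hn).ne'
  rw [Pi.div_apply]
  field_simp

theorem eventually_apply_eq_self_of_tendsto_div (ha_pos : ∀ n, 0 < a n) (ha_mono : Monotone a)
    (ha_ratio : Tendsto (fun n => a (n + 1) / a n) atTop atTop) {lam : ℝ} (hlam : 0 < lam)
    {M : ℕ → ℕ} (hM : Tendsto (fun n => a (M n) / a n) atTop (𝓝 lam)) :
    ∀ᶠ n in atTop, M n = n := by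
  filter_upwards [(tendsto_pred_div_nhds_zero ha_ratio).eventually_lt hM hlam,
    hM.eventually (eventually_lt_nhds (lt_add_one lam)), ha_ratio.eventually_gt_atTop (lam + 1)]
    with n hlow hup hratio
  rw [div_lt_div_iff_of_pos_right (ha_pos n)] at hlow
  have hup := (div_lt_div_iff_of_pos_right (ha_pos n)).1 (hup.trans hratio)
  have := ha_mono.reflect_lt hlow
  have := ha_mono.reflect_lt hup
  omega

theorem eq_one_of_eventually_exists_abs_sub_sub_le (ha_pos : ∀ n, 0 < a n) (ha_mono : Monotone a)
    (ha_ratio : Tendsto (fun n => a (n + 1) / a n) atTop atTop) {lam C : ℝ} (hlam : 0 < lam)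
    (h : ∀ᶠ n in atTop, ∃ i j, |a i - a j - lam * a n| ≤ C) : lam = 1 := by
  obtain ⟨N, hN⟩ := eventually_atTop.1 h
  choose! M J hMJ using hN
  have hlim := tendsto_apply_div_of_abs_sub_sub_le ha_pos ha_mono ha_ratio hlam
    (eventually_atTop.2 ⟨N, hMJ⟩)
  refine tendsto_nhds_unique hlim (tendsto_const_nhds.congr' ?_)
  filter_upwards [eventually_apply_eq_self_of_tendsto_div ha_pos ha_mono ha_ratio hlam hlim]
    with n hn
  rw [hn, div_self (ha_pos n).ne']

end SuperLacunary

section Distortion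

variable {X Y : Type*} [MetricSpace X] [MetricSpace Y]

theorem abs_dist_sub_mul_dist_le_toReal_disScaled {l : ℝ} {R : Set (X × Y)}
    (hR : disScaled l R ≠ ⊤) {p p' : X × Y} (hp : p ∈ R) (hp' : p' ∈ R) :
    |dist p.1 p'.1 - l * dist p.2 p'.2| ≤ (disScaled l R).toReal :=
  (ENNReal.ofReal_le_iff_le_toReal hR).1 <| le_iSup₂_of_le p hp <| le_iSup₂_of_le p' hp' le_rfl

theorem disScaled_one_diagonal : disScaled 1 {p : X × X | p.1 = p.2} = 0 := by
  refine le_antisymm (iSup₂_le fun p hp => iSup₂_le fun p' hp' => ?_) bot_le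
  simp_all

theorem exists_abs_sub_sub_mul_abs_sub_le {S : Set ℝ} {l : ℝ} {R : Set (S × S)}
    (hR : ∀ y, ∃ x, (x, y) ∈ R) (hfin : disScaled l R ≠ ⊤) (y y' : S) :
    ∃ x x' : S, |(x : ℝ) - x' - l * (|(y : ℝ) - y'|)| ≤ (disScaled l R).toReal := by
  obtain ⟨x, hx⟩ := hR y
  obtain ⟨x', hx'⟩ := hR y'
  have h := abs_dist_sub_mul_dist_le_toReal_disScaled hfin hx hx'
  simp only [Subtype.dist_eq, Real.dist_eq] at h
  rcases abs_choice ((x : ℝ) - x') with e | e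
  · exact ⟨x, x', by rwa [e] at h⟩
  · exact ⟨x', x, by rwa [e, neg_sub] at h⟩

end Distortion

theorem tendsto_pow_succ_sq_div_pow_sq {q : ℝ} (hq : 1 < q) :
    Tendsto (fun n : ℕ => q ^ ((n + 1) ^ 2) / q ^ (n ^ 2)) atTop atTop := by
  have hodd : ∀ n : ℕ, q ^ ((n + 1) ^ 2) / q ^ (n ^ 2) = q ^ (2 * n + 1) := fun n => by
    rw [div_eq_iff (pow_pos (by linarith) _).ne', ← pow_add]
    ring_nf
  simp only [hodd]
  exact tendsto_atTop_mono (fun n => pow_le_pow_right₀ hq.le (by omega))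
    (tendsto_pow_atTop_atTop_of_one_lt hq)

/-- Corollary 5.9: for reals `q > 1` and `λ > 0` and
`X = {q^{n²} : n ≥ 1} ⊆ ℝ`, some correspondence `R` between `X` and `X` has
`sup { |d(x,x') − λ·d(y,y')| } < ∞` iff `λ = 1`. -/
theorem stabilizer_trivial_square_exponents (q lam : ℝ) (hq : 1 < q) (hlam : 0 < lam)
    (Xs : Set ℝ)
    (hXs : Xs = {x : ℝ | ∃ n : ℕ, 1 ≤ n ∧ x = q ^ ((n : ℝ) ^ 2)}) :
    (∃ R : Set (Xs × Xs), IsCorrespondence R ∧ disScaled lam R < ⊤) ↔ lam = 1 := by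
  have hrpow : ∀ n : ℕ, q ^ ((n : ℝ) ^ 2) = q ^ (n ^ 2) := fun n => by
    rw [← Nat.cast_pow, Real.rpow_natCast]
  have ha_mem : ∀ n, 1 ≤ n → q ^ (n ^ 2) ∈ Xs := fun n hn => hXs ▸ ⟨n, hn, (hrpow n).symm⟩
  have ha_mono : Monotone fun n : ℕ => q ^ (n ^ 2) :=
    fun m n h => pow_le_pow_right₀ hq.le (Nat.pow_le_pow_left h 2)
  constructor
  · rintro ⟨R, ⟨-, hR⟩, hfin⟩
    refine eq_one_of_eventually_exists_abs_sub_sub_le (fun n => pow_pos (by linarith) _) ha_mono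
      (tendsto_pow_succ_sq_div_pow_sq hq) hlam (C := (disScaled lam R).toReal + lam * q) ?_
    filter_upwards [eventually_ge_atTop 1] with n hn
    obtain ⟨⟨x, hx⟩, ⟨x', hx'⟩, h⟩ :=
      exists_abs_sub_sub_mul_abs_sub_le hR hfin.ne ⟨_, ha_mem n hn⟩ ⟨_, ha_mem 1 le_rfl⟩
    obtain ⟨i, -, rfl⟩ := hXs ▸ hx
    obtain ⟨j, -, rfl⟩ := hXs ▸ hx'
    refine ⟨i, j, ?_⟩
    simp only [hrpow, one_pow, pow_one] at h
    have hqn : q ≤ q ^ (n ^ 2) := by simpa using ha_mono hn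
    rw [abs_of_nonneg (sub_nonneg.2 hqn)] at h
    have hlq : 0 < lam * q := mul_pos hlam (by linarith)
    rw [abs_le] at h ⊢
    constructor <;> linarith [h.1, h.2]
  · rintro rfl
    exact ⟨_, ⟨fun x => ⟨x, rfl⟩, fun y => ⟨y, rfl⟩⟩, disScaled_one_diagonal.trans_lt ENNReal.zero_lt_top⟩
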